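/- arXiv:2104.02596 — 4 statements merged into one kernel-verified Lean document; each statement's English description precedes it below -/
import Mathlib

section
/- Let (θ_k) be a sequence of positive reals with θ_0 = 1, θ_k ≤ 1, satisfying (1 - θ_k)/θ_k² = 1/θ_{k-1}² for k ≥ 1. Then the sequence is non-increasing (θ_k ≤ θ_{k-1}), and moreover θ_{k-1}/θ_k = 1/√(1 - θ_k) ≤ 1.62 for all k ≥ 1. -/
/-!
Clearing denominators, the recurrence reads `θₖ₋₁² (1 - θₖ) = θₖ²`. Hence `θₖ² ≤ θₖ₋₁²`, and
`√(1 - θₖ) = θₖ / θₖ₋₁`. Since `θₖ₋₁ ≤ 1` we also get `θₖ² + θₖ ≤ 1`, so `θₖ` is at most the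
inverse golden ratio `(√5 - 1)/2 ≈ 0.618`, which gives `1 / √(1 - θₖ) ≤ 1.62`.
-/

namespace Nesterov

variable {a b : ℝ}

lemma sq_mul_one_sub_eq (ha : a ≠ 0) (hb : b ≠ 0) (h : (1 - b) / b ^ 2 = 1 / a ^ 2) :
    a ^ 2 * (1 - b) = b ^ 2 := by
  field_simp at h
  linarith

lemma le_of_sq_mul_one_sub_eq (ha : 0 < a) (hb : 0 < b) (h : a ^ 2 * (1 - b) = b ^ 2) :
    b ≤ a := by
  have hsq : b ^ 2 ≤ a ^ 2 := by nlinarith [sq_nonneg a]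
  exact (pow_le_pow_iff_left₀ hb.le ha.le two_ne_zero).mp hsq

lemma sqrt_one_sub_eq_div (ha : 0 < a) (hb : 0 < b) (h : a ^ 2 * (1 - b) = b ^ 2) :
    √(1 - b) = b / a := by
  have hsq : 1 - b = (b / a) ^ 2 := by
    rw [div_pow, eq_div_iff (by positivity), ← h]
    ring
  rw [hsq, Real.sqrt_sq (by positivity)]

lemma sq_add_le_one (ha : 0 < a) (ha1 : a ≤ 1) (h : a ^ 2 * (1 - b) = b ^ 2) :
    b ^ 2 + b ≤ 1 := by
  have hb1 : 0 ≤ 1 - b := by nlinarith [sq_nonneg b]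
  have ha2 : a ^ 2 ≤ 1 := pow_le_one₀ ha.le ha1
  nlinarith

lemma one_div_sqrt_one_sub_le (h : b ^ 2 + b ≤ 1) : 1 / √(1 - b) ≤ 1.62 := by
  have hb : b ≤ 0.6189 := by nlinarith
  have hsqrt : 1 / 1.62 ≤ √(1 - b) := Real.le_sqrt_of_sq_le (by nlinarith)
  calc 1 / √(1 - b) ≤ 1 / (1 / 1.62) := one_div_le_one_div_of_le (by norm_num) hsqrt
    _ = 1.62 := by norm_num

end Nesterov

theorem stmt_1_general (θ : ℕ → ℝ)
    (hpos : ∀ k, 0 < θ k) (hle1 : ∀ k, θ k ≤ 1)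
    (hrec : ∀ k, 1 ≤ k → (1 - θ k) / (θ k) ^ 2 = 1 / (θ (k - 1)) ^ 2) :
    (∀ k, 1 ≤ k → θ k ≤ θ (k - 1)) ∧
    (∀ k, 1 ≤ k → θ (k - 1) / θ k = 1 / Real.sqrt (1 - θ k) ∧
      1 / Real.sqrt (1 - θ k) ≤ 1.62) := by
  have hstep : ∀ k, 1 ≤ k → θ (k - 1) ^ 2 * (1 - θ k) = θ k ^ 2 := fun k hk =>
    Nesterov.sq_mul_one_sub_eq (hpos _).ne' (hpos k).ne' (hrec k hk)
  refine ⟨fun k hk => Nesterov.le_of_sq_mul_one_sub_eq (hpos _) (hpos k) (hstep k hk),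
    fun k hk => ⟨?_, ?_⟩⟩
  · rw [Nesterov.sqrt_one_sub_eq_div (hpos _) (hpos k) (hstep k hk), one_div_div]
  · exact Nesterov.one_div_sqrt_one_sub_le
      (Nesterov.sq_add_le_one (hpos _) (hle1 _) (hstep k hk))

/-- Nesterov step-size sequence is non-increasing and θₖ₋₁/θₖ = 1/√(1-θₖ) ≤ 1.62. -/
theorem stmt_1 (θ : ℕ → ℝ)
    (hθ0 : θ 0 = 1)
    (hpos : ∀ k, 0 < θ k) (hle1 : ∀ k, θ k ≤ 1)
    (hrec : ∀ k, 1 ≤ k → (1 - θ k) / (θ k) ^ 2 = 1 / (θ (k - 1)) ^ 2) :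
    (∀ k, 1 ≤ k → θ k ≤ θ (k - 1)) ∧
    (∀ k, 1 ≤ k → θ (k - 1) / θ k = 1 / Real.sqrt (1 - θ k) ∧
      1 / Real.sqrt (1 - θ k) ≤ 1.62) :=
  stmt_1_general θ hpos hle1 hrec
end

section
/- Let (θ_k) satisfy θ_0 = 1, 0 < θ_k ≤ 1, and (1 - θ_k)/θ_k² = 1/θ_{k-1}², and let ρ ∈ (0,1). Then for any integers 0 ≤ r < K, the weighted sum S = Σ_{k=r+1}^{K} ρ^k/θ_k² satisfies S ≤ 3 ρ^{r+1} / ((1-ρ)³ θ_r²). -/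
/-!
Write `a k = 1 / θ k`. The recursion reads `a k ^ 2 = a (k - 1) ^ 2 + a k`, which forces
`a k ≤ a (k - 1) + 1`; hence `a (r + n) ≤ a r + n`, and summing the recursion gives
`a (r + n) ^ 2 ≤ a r ^ 2 + n a r + n (n + 1) / 2`. The weighted sum is then dominated by
`ρ ^ (r + 1)` times three geometric-type series, summing to
`a r ^ 2 / (1 - ρ) + a r / (1 - ρ) ^ 2 + 1 / (1 - ρ) ^ 3 ≤ 3 a r ^ 2 / (1 - ρ) ^ 3`.
-/

open Finset
open scoped BigOperators

lemma le_add_one_of_sq_eq_sq_add {x y : ℝ} (hy : 0 ≤ y) (h : x ^ 2 = y ^ 2 + x) :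
    x ≤ y + 1 := by
  by_contra! hxy
  nlinarith

lemma hasSum_geometric_mul_quadratic {ρ : ℝ} (hρ0 : 0 ≤ ρ) (hρ1 : ρ < 1) (A B : ℝ) :
    HasSum (fun i : ℕ => ρ ^ i * (A + (i + 1) * B + (i + 1) * (i + 2) / 2))
      (A / (1 - ρ) + B / (1 - ρ) ^ 2 + 1 / (1 - ρ) ^ 3) := by
  have hρ : ‖ρ‖ < 1 := by rwa [Real.norm_of_nonneg hρ0]
  have h0 := (hasSum_geometric_of_lt_one hρ0 hρ1).mul_left A
  have h1 := (hasSum_choose_mul_geometric_of_norm_lt_one 1 hρ).mul_left B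
  have h2 := hasSum_choose_mul_geometric_of_norm_lt_one 2 hρ
  have key := (h0.add h1).add h2
  have hterm : ∀ i : ℕ, A * ρ ^ i + B * ((i + 1).choose 1 * ρ ^ i) + (i + 2).choose 2 * ρ ^ i
      = ρ ^ i * (A + (i + 1) * B + (i + 1) * (i + 2) / 2) := by
    intro i
    rw [Nat.choose_one_right, Nat.cast_choose_two]
    push_cast
    ring
  simp only [hterm] at key
  simpa [div_eq_mul_inv] using key

section

variable {a : ℕ → ℝ}

lemma apply_add_le_of_sq_succ_eq (ha : ∀ k, 0 ≤ a k)
    (hrec : ∀ k, a (k + 1) ^ 2 = a k ^ 2 + a (k + 1)) (r n : ℕ) : a (r + n) ≤ a r + n := by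
  induction n with
  | zero => simp
  | succ n ih =>
    have hstep := le_add_one_of_sq_eq_sq_add (ha (r + n)) (hrec (r + n))
    rw [← add_assoc]
    push_cast
    linarith

lemma sq_apply_add_le_of_sq_succ_eq (ha : ∀ k, 0 ≤ a k)
    (hrec : ∀ k, a (k + 1) ^ 2 = a k ^ 2 + a (k + 1)) (r n : ℕ) :
    a (r + n) ^ 2 ≤ a r ^ 2 + n * a r + n * (n + 1) / 2 := by
  induction n with
  | zero => simp
  | succ n ih =>
    have hlin := apply_add_le_of_sq_succ_eq ha hrec r (n + 1)
    rw [← add_assoc] at hlin ⊢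
    rw [hrec]
    push_cast at hlin ⊢
    linarith

lemma sum_pow_mul_sq_le_of_sq_succ_eq (ha : ∀ k, 0 ≤ a k)
    (hrec : ∀ k, a (k + 1) ^ 2 = a k ^ 2 + a (k + 1)) {ρ : ℝ} (hρ0 : 0 ≤ ρ) (hρ1 : ρ < 1)
    {r : ℕ} (hr : 1 ≤ a r) (n : ℕ) :
    ∑ i ∈ range n, ρ ^ i * a (r + 1 + i) ^ 2 ≤ 3 * a r ^ 2 / (1 - ρ) ^ 3 := by
  set A := a r ^ 2
  set B := a r
  have hρ : 0 < 1 - ρ := by linarith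
  have hBA : B ≤ A := by nlinarith
  have hA : 1 ≤ A := hr.trans hBA
  calc ∑ i ∈ range n, ρ ^ i * a (r + 1 + i) ^ 2
      ≤ ∑ i ∈ range n, ρ ^ i * (A + (i + 1) * B + (i + 1) * (i + 2) / 2) := by
        gcongr with i
        have hsq := sq_apply_add_le_of_sq_succ_eq ha hrec r (i + 1)
        rw [show r + (i + 1) = r + 1 + i by omega] at hsq
        push_cast at hsq
        linarith
    _ ≤ A / (1 - ρ) + B / (1 - ρ) ^ 2 + 1 / (1 - ρ) ^ 3 :=
        sum_le_hasSum _ (fun i _ => mul_nonneg (pow_nonneg hρ0 i) (by positivity))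
          (hasSum_geometric_mul_quadratic hρ0 hρ1 A B)
    _ ≤ A / (1 - ρ) ^ 3 + A / (1 - ρ) ^ 3 + A / (1 - ρ) ^ 3 := by
        have h3 : (1 - ρ) ^ 3 ≤ 1 - ρ := pow_le_of_le_one hρ.le (by linarith) (by norm_num)
        have h2 : (1 - ρ) ^ 3 ≤ (1 - ρ) ^ 2 := pow_le_pow_of_le_one hρ.le (by linarith) (by norm_num)
        gcongr
    _ = 3 * A / (1 - ρ) ^ 3 := by ring

end

theorem stmt_2_general (θ : ℕ → ℝ)
    (hpos : ∀ k, 0 < θ k) (hle1 : ∀ k, θ k ≤ 1)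
    (hrec : ∀ k, 1 ≤ k → (1 - θ k) / (θ k) ^ 2 = 1 / (θ (k - 1)) ^ 2)
    (ρ : ℝ) (hρ0 : 0 < ρ) (hρ1 : ρ < 1)
    (r K : ℕ) :
    ∑ k ∈ Finset.Icc (r + 1) K, ρ ^ k / (θ k) ^ 2 ≤
      3 * ρ ^ (r + 1) / ((1 - ρ) ^ 3 * (θ r) ^ 2) := by
  set a : ℕ → ℝ := fun k => (θ k)⁻¹ with ha_def
  have ha : ∀ k, 0 ≤ a k := fun k => (inv_pos.2 (hpos k)).le
  have ha_rec : ∀ k, a (k + 1) ^ 2 = a k ^ 2 + a (k + 1) := by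
    intro k
    have h := hrec (k + 1) (by omega)
    rw [Nat.add_sub_cancel] at h
    have := (hpos k).ne'
    have := (hpos (k + 1)).ne'
    field_simp at h
    simp only [ha_def]
    field_simp
    linarith
  have har : 1 ≤ a r := one_le_inv₀ (hpos r) |>.2 (hle1 r)
  calc ∑ k ∈ Icc (r + 1) K, ρ ^ k / θ k ^ 2
      = ρ ^ (r + 1) * ∑ i ∈ range (K - r), ρ ^ i * a (r + 1 + i) ^ 2 := by
        rw [← Ico_add_one_right_eq_Icc, sum_Ico_eq_sum_range, mul_sum,
          show K + 1 - (r + 1) = K - r by omega]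
        refine sum_congr rfl fun i _ => ?_
        simp only [ha_def, pow_add, inv_pow]
        ring
    _ ≤ ρ ^ (r + 1) * (3 * a r ^ 2 / (1 - ρ) ^ 3) := by
        gcongr
        exact sum_pow_mul_sq_le_of_sq_succ_eq ha ha_rec hρ0.le hρ1 har _
    _ = 3 * ρ ^ (r + 1) / ((1 - ρ) ^ 3 * θ r ^ 2) := by
        simp only [ha_def, inv_pow]
        field_simp

/-- Weighted sum bound: Σ_{k=r+1}^K ρ^k/θₖ² ≤ 3ρ^{r+1}/((1-ρ)³θᵣ²). -/
theorem stmt_2 (θ : ℕ → ℝ)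
    (hθ0 : θ 0 = 1)
    (hpos : ∀ k, 0 < θ k) (hle1 : ∀ k, θ k ≤ 1)
    (hrec : ∀ k, 1 ≤ k → (1 - θ k) / (θ k) ^ 2 = 1 / (θ (k - 1)) ^ 2)
    (ρ : ℝ) (hρ0 : 0 < ρ) (hρ1 : ρ < 1)
    (r K : ℕ) (hrK : r < K) :
    ∑ k ∈ Finset.Icc (r + 1) K, ρ ^ k / (θ k) ^ 2 ≤
      3 * ρ ^ (r + 1) / ((1 - ρ) ^ 3 * (θ r) ^ 2) :=
  stmt_2_general θ hpos hle1 hrec ρ hρ0 hρ1 r K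
end

section
/- Let f₁,...,f_m : ℝⁿ → ℝ each be L-smooth and convex, and let F = (1/m)Σᵢ fᵢ. With ȳ, s̄, f(ȳ, y) as in the inexact-gradient setup, for every w ∈ ℝⁿ: F(w) ≤ f(ȳ, y) + ⟨s̄, w − ȳ⟩ + (L/2)‖w − ȳ‖² + (L/(2m)) Σᵢ ‖yᵢ − ȳ‖². -/
/-!
Apply the descent lemma of each `fᵢ` at `yᵢ` and recentre it at `ȳ`: expanding
`‖w - yᵢ‖² = ‖w - ȳ‖² - 2⟪w - ȳ, yᵢ - ȳ⟫ + ‖yᵢ - ȳ‖²` leaves a cross term that is linear in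
`yᵢ - ȳ`, so it vanishes on averaging over `i` because `ȳ` is the mean of the `yᵢ`.
-/

open scoped RealInnerProductSpace

variable {E : Type*} [NormedAddCommGroup E] [InnerProductSpace ℝ E]

theorem le_of_descent_recenter {φ : E → ℝ} {L : ℝ} {u s : E}
    (h : ∀ v, φ v ≤ φ u + ⟪s, v - u⟫ + L / 2 * ‖v - u‖ ^ 2) (c w : E) :
    φ w ≤ φ u + ⟪s, c - u⟫ + ⟪s, w - c⟫ + L / 2 * ‖w - c‖ ^ 2 + L / 2 * ‖u - c‖ ^ 2
      - L * ⟪w - c, u - c⟫ := by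
  have hsplit : w - u = (w - c) - (u - c) := by abel
  have hinner : ⟪s, w - u⟫ = ⟪s, c - u⟫ + ⟪s, w - c⟫ := by
    rw [← inner_add_right]; congr 1; abel
  calc φ w ≤ φ u + ⟪s, w - u⟫ + L / 2 * ‖w - u‖ ^ 2 := h w
    _ = _ := by rw [hinner, hsplit, norm_sub_sq_real]; ring

theorem sum_sub_inv_card_smul_sum {ι : Type*} [Fintype ι] [Nonempty ι] (y : ι → E) :
    ∑ i, (y i - (Fintype.card ι : ℝ)⁻¹ • ∑ j, y j) = 0 := by
  have hcard : (Fintype.card ι : ℝ) ≠ 0 := Nat.cast_ne_zero.mpr Fintype.card_ne_zero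
  rw [Finset.sum_sub_distrib, Finset.sum_const, Finset.card_univ, ← Nat.cast_smul_eq_nsmul ℝ,
    smul_smul, mul_inv_cancel₀ hcard, one_smul, sub_self]

theorem sum_le_of_descent {ι : Type*} [Fintype ι] {φ : ι → E → ℝ} {s y : ι → E} {L : ℝ}
    (h : ∀ i v, φ i v ≤ φ i (y i) + ⟪s i, v - y i⟫ + L / 2 * ‖v - y i‖ ^ 2)
    {c : E} (hc : ∑ i, (y i - c) = 0) (w : E) :
    ∑ i, φ i w ≤ ∑ i, (φ i (y i) + ⟪s i, c - y i⟫) + ⟪∑ i, s i, w - c⟫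
      + Fintype.card ι * (L / 2 * ‖w - c‖ ^ 2) + L / 2 * ∑ i, ‖y i - c‖ ^ 2 := by
  have hcross : ∑ i, L * ⟪w - c, y i - c⟫ = 0 := by
    rw [← Finset.mul_sum, ← inner_sum, hc, inner_zero_right, mul_zero]
  calc ∑ i, φ i w
      ≤ ∑ i, (φ i (y i) + ⟪s i, c - y i⟫ + ⟪s i, w - c⟫ + L / 2 * ‖w - c‖ ^ 2
          + L / 2 * ‖y i - c‖ ^ 2 - L * ⟪w - c, y i - c⟫) :=
        Finset.sum_le_sum fun i _ => le_of_descent_recenter (h i) c w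
    _ = _ := by
      simp only [Finset.sum_sub_distrib, Finset.sum_add_distrib, hcross, sum_inner,
        Finset.sum_const, Finset.card_univ, nsmul_eq_mul, Finset.mul_sum]
      ring

theorem stmt_9_general (n m : ℕ) (hm : 0 < m) (L : ℝ)
    (f : Fin m → EuclideanSpace ℝ (Fin n) → ℝ)
    (g : Fin m → EuclideanSpace ℝ (Fin n) → EuclideanSpace ℝ (Fin n))
    (hsm : ∀ i (u v : EuclideanSpace ℝ (Fin n)),
      f i v ≤ f i u + ⟪g i u, v - u⟫ + L / 2 * ‖v - u‖ ^ 2)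
    (y : Fin m → EuclideanSpace ℝ (Fin n))
    (ybar : EuclideanSpace ℝ (Fin n)) (hybar : ybar = (m : ℝ)⁻¹ • ∑ i, y i)
    (sbar : EuclideanSpace ℝ (Fin n)) (hsbar : sbar = (m : ℝ)⁻¹ • ∑ i, g i (y i))
    (w : EuclideanSpace ℝ (Fin n)) :
    (m : ℝ)⁻¹ * ∑ i, f i w ≤
      (m : ℝ)⁻¹ * ∑ i, (f i (y i) + ⟪g i (y i), ybar - y i⟫) +
        ⟪sbar, w - ybar⟫ + L / 2 * ‖w - ybar‖ ^ 2 +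
        L / (2 * m) * ∑ i, ‖y i - ybar‖ ^ 2 := by
  have : NeZero m := ⟨hm.ne'⟩
  have hmean : ∑ i, (y i - ybar) = 0 := by
    simpa [hybar] using sum_sub_inv_card_smul_sum y
  have hsum := sum_le_of_descent (fun i => hsm i (y i)) hmean w
  rw [Fintype.card_fin] at hsum
  calc (m : ℝ)⁻¹ * ∑ i, f i w ≤ (m : ℝ)⁻¹ * _ :=
        mul_le_mul_of_nonneg_left hsum (by positivity)
    _ = _ := by
      rw [hsbar, real_inner_smul_left]
      field_simp

/-- Inexact smoothness upper bound (Lemma 1, inequality (13)). -/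
theorem stmt_9 (n m : ℕ) (hm : 0 < m) (L : ℝ) (hL : 0 < L)
    (f : Fin m → EuclideanSpace ℝ (Fin n) → ℝ)
    (g : Fin m → EuclideanSpace ℝ (Fin n) → EuclideanSpace ℝ (Fin n))
    (hconv : ∀ i (u v : EuclideanSpace ℝ (Fin n)),
      f i u + ⟪g i u, v - u⟫ ≤ f i v)
    (hsm : ∀ i (u v : EuclideanSpace ℝ (Fin n)),
      f i v ≤ f i u + ⟪g i u, v - u⟫ + L / 2 * ‖v - u‖ ^ 2)
    (y : Fin m → EuclideanSpace ℝ (Fin n))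
    (ybar : EuclideanSpace ℝ (Fin n)) (hybar : ybar = (m : ℝ)⁻¹ • ∑ i, y i)
    (sbar : EuclideanSpace ℝ (Fin n)) (hsbar : sbar = (m : ℝ)⁻¹ • ∑ i, g i (y i))
    (w : EuclideanSpace ℝ (Fin n)) :
    (m : ℝ)⁻¹ * ∑ i, f i w ≤
      (m : ℝ)⁻¹ * ∑ i, (f i (y i) + ⟪g i (y i), ybar - y i⟫) +
        ⟪sbar, w - ybar⟫ + L / 2 * ‖w - ybar‖ ^ 2 +
        L / (2 * m) * ∑ i, ‖y i - ybar‖ ^ 2 :=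
  stmt_9_general n m hm L f g hsm y ybar hybar sbar hsbar w
end

section
/- Let f₁,...,f_m be L-smooth convex functions on ℝⁿ. Given points y¹₁,...,y¹_m and y²₁,...,y²_m with averages ȳ¹, ȳ² and a reference point x̄ ∈ ℝⁿ, and any τ > 0, Σᵢ ‖∇fᵢ(y²ᵢ) − ∇fᵢ(y¹ᵢ)‖² ≤ 2mL(1+τ) D_f(x̄, y²) + 2L²(1 + 1/τ) [ m‖x̄ − ȳ¹‖² + Σᵢ ‖ȳ¹ − y¹ᵢ‖² ], where D_f(x̄, y²) = (1/m)Σᵢ [fᵢ(x̄) − fᵢ(y²ᵢ) − ⟨∇fᵢ(y²ᵢ), x̄ − y²ᵢ⟩]. -/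
/-!
Split `∇fᵢ(y²ᵢ) - ∇fᵢ(y¹ᵢ) = (∇fᵢ(y²ᵢ) - ∇fᵢ(x̄)) + (∇fᵢ(x̄) - ∇fᵢ(y¹ᵢ))` and apply Young's
inequality with parameter `τ`. Cocoercivity of the gradient of a convex `L`-smooth function bounds
the first square by `2L` times the Bregman divergence of `fᵢ` between `x̄` and `y²ᵢ`; the second is at
most `L² ‖x̄ - y¹ᵢ‖² ≤ 2L² (‖x̄ - ȳ¹‖² + ‖ȳ¹ - y¹ᵢ‖²)`.
-/

open scoped RealInnerProductSpace BigOperators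
open Set

lemma image_one_le_of_deriv_sub_le {φ φ' : ℝ → ℝ} {K : ℝ} (hφ : ∀ t, HasDerivAt φ (φ' t) t)
    (hK : ∀ t ∈ Ico (0 : ℝ) 1, φ' t - φ' 0 ≤ K * t) :
    φ 1 ≤ φ 0 + φ' 0 + K / 2 := by
  have hB : ∀ t, HasDerivAt (fun s => φ 0 + s * φ' 0 + K / 2 * s ^ 2) (φ' 0 + K * t) t := by
    intro t
    refine (((hasDerivAt_id t).mul_const (φ' 0)).const_add (φ 0) |>.add
      ((hasDerivAt_pow 2 t).const_mul (K / 2))).congr_deriv ?_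
    norm_num
    ring
  have := image_le_of_deriv_right_le_deriv_boundary (a := 0) (b := 1)
    (fun t _ => (hφ t).continuousAt.continuousWithinAt) (fun t _ => (hφ t).hasDerivWithinAt)
    (by simp) (fun t _ => (hB t).continuousAt.continuousWithinAt)
    (fun t _ => (hB t).hasDerivWithinAt) (fun t ht => by linarith [hK t ht])
    (right_mem_Icc.2 zero_le_one)
  simpa using this

lemma norm_add_sq_le_of_pos {F : Type*} [SeminormedAddCommGroup F] (a b : F) {τ : ℝ}
    (hτ : 0 < τ) : ‖a + b‖ ^ 2 ≤ (1 + τ) * ‖a‖ ^ 2 + (1 + 1 / τ) * ‖b‖ ^ 2 := by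
  have hyoung : 2 * ‖a‖ * ‖b‖ ≤ τ * ‖a‖ ^ 2 + 1 / τ * ‖b‖ ^ 2 := by
    have := div_nonneg (sq_nonneg (τ * ‖a‖ - ‖b‖)) hτ.le
    field_simp at this ⊢
    nlinarith
  have := norm_add_le a b
  nlinarith [norm_nonneg (a + b)]

variable {E : Type*} [NormedAddCommGroup E] [InnerProductSpace ℝ E]

def bregmanDiv (f : E → ℝ) (g : E → E) (x y : E) : ℝ := f x - f y - ⟪g y, x - y⟫

lemma bregmanDiv_eq_sub_add_inner (f : E → ℝ) (g : E → E) (x y z : E) :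
    bregmanDiv f g x y = bregmanDiv f g z y - bregmanDiv f g z x + ⟪g x - g y, x - z⟫ := by
  simp only [bregmanDiv, inner_sub_left, inner_sub_right]
  ring

variable [CompleteSpace E]

lemma HasGradientAt.hasDerivAt_comp_lineMap {f : E → ℝ} {f' x y : E} {t : ℝ}
    (hf : HasGradientAt f f' (AffineMap.lineMap x y t)) :
    HasDerivAt (f ∘ AffineMap.lineMap x y) ⟪f', y - x⟫ t := by
  simpa using hf.hasFDerivAt.comp_hasDerivAt t AffineMap.hasDerivAt_lineMap

lemma bregmanDiv_nonneg {f : E → ℝ} {g : E → E} (hconv : ConvexOn ℝ univ f) {x : E}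
    (hgrad : HasGradientAt f (g x) x) (y : E) : 0 ≤ bregmanDiv f g y x := by
  have hφ : ConvexOn ℝ univ (f ∘ AffineMap.lineMap x y) := hconv.comp_affineMap _
  have := hφ.le_slope_of_hasDerivAt (mem_univ 0) (mem_univ 1) zero_lt_one
    (HasGradientAt.hasDerivAt_comp_lineMap (t := 0) (by simpa using hgrad))
  simp only [slope_def_field, Function.comp_apply, AffineMap.lineMap_apply_one,
    AffineMap.lineMap_apply_zero, sub_zero, div_one] at this
  simp only [bregmanDiv]
  linarith

lemma bregmanDiv_le_of_lipschitz {f : E → ℝ} {g : E → E} {L : ℝ}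
    (hgrad : ∀ x, HasGradientAt f (g x) x) (hlip : ∀ u v, ‖g v - g u‖ ≤ L * ‖v - u‖)
    (x y : E) : bregmanDiv f g y x ≤ L / 2 * ‖y - x‖ ^ 2 := by
  set ℓ := AffineMap.lineMap (k := ℝ) x y
  have hK : ∀ t ∈ Ico (0 : ℝ) 1, ⟪g (ℓ t), y - x⟫ - ⟪g (ℓ 0), y - x⟫ ≤ L * ‖y - x‖ ^ 2 * t := by
    intro t ht
    rw [← inner_sub_left]
    calc _ ≤ ‖g (ℓ t) - g (ℓ 0)‖ * ‖y - x‖ := real_inner_le_norm _ _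
      _ ≤ L * ‖ℓ t - ℓ 0‖ * ‖y - x‖ := by gcongr; exact hlip _ _
      _ = L * ‖y - x‖ ^ 2 * t := by
          simp only [ℓ, AffineMap.lineMap_apply, vsub_eq_sub, vadd_eq_add, zero_smul, zero_add,
            add_sub_cancel_right, norm_smul, Real.norm_eq_abs, abs_of_nonneg ht.1]
          ring
  have := image_one_le_of_deriv_sub_le (fun t => (hgrad (ℓ t)).hasDerivAt_comp_lineMap) hK
  simp only [Function.comp_apply, AffineMap.lineMap_apply_one, AffineMap.lineMap_apply_zero, ℓ]
    at this
  simp only [bregmanDiv]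
  linarith

lemma norm_sub_sq_le_bregmanDiv {f : E → ℝ} {g : E → E} {L : ℝ} (hL : 0 < L)
    (hgrad : ∀ x, HasGradientAt f (g x) x) (hconv : ConvexOn ℝ univ f)
    (hlip : ∀ u v, ‖g v - g u‖ ≤ L * ‖v - u‖) (x y : E) :
    ‖g x - g y‖ ^ 2 ≤ 2 * L * bregmanDiv f g x y := by
  set d := g x - g y
  -- Compare `f z` from below by convexity at `y` and from above by the descent lemma at `x`.
  set z := x - L⁻¹ • d
  have hzy := bregmanDiv_nonneg hconv (hgrad y) z
  have hzx := bregmanDiv_le_of_lipschitz hgrad hlip x z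
  have hxz : x - z = L⁻¹ • d := sub_sub_cancel _ _
  have hzx' : ‖z - x‖ = L⁻¹ * ‖d‖ := by
    rw [← norm_neg, neg_sub, hxz, norm_smul, Real.norm_of_nonneg (inv_nonneg.2 hL.le)]
  rw [bregmanDiv_eq_sub_add_inner f g x y z, hxz, real_inner_smul_right,
    real_inner_self_eq_norm_sq]
  rw [hzx'] at hzx
  field_simp at hzx ⊢
  nlinarith

lemma norm_gradient_sub_sq_le {f : E → ℝ} {g : E → E} {L τ : ℝ} (hL : 0 < L) (hτ : 0 < τ)
    (hgrad : ∀ x, HasGradientAt f (g x) x) (hconv : ConvexOn ℝ univ f)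
    (hlip : ∀ u v, ‖g v - g u‖ ≤ L * ‖v - u‖) (x c y₁ y₂ : E) :
    ‖g y₂ - g y₁‖ ^ 2 ≤ 2 * L * (1 + τ) * bregmanDiv f g x y₂ +
      2 * L ^ 2 * (1 + 1 / τ) * (‖x - c‖ ^ 2 + ‖c - y₁‖ ^ 2) := by
  have hcoco : ‖g y₂ - g x‖ ^ 2 ≤ 2 * L * bregmanDiv f g x y₂ := by
    rw [norm_sub_rev]; exact norm_sub_sq_le_bregmanDiv hL hgrad hconv hlip x y₂
  have hlip' : ‖g x - g y₁‖ ^ 2 ≤ L ^ 2 * (2 * (‖x - c‖ ^ 2 + ‖c - y₁‖ ^ 2)) := by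
    calc ‖g x - g y₁‖ ^ 2 ≤ (L * (‖x - c‖ + ‖c - y₁‖)) ^ 2 := by
          gcongr
          exact (hlip y₁ x).trans (by gcongr; exact norm_sub_le_norm_sub_add_norm_sub _ _ _)
      _ ≤ L ^ 2 * (2 * (‖x - c‖ ^ 2 + ‖c - y₁‖ ^ 2)) := by
          rw [mul_pow]; gcongr; exact add_sq_le
  calc ‖g y₂ - g y₁‖ ^ 2 = ‖(g y₂ - g x) + (g x - g y₁)‖ ^ 2 := by rw [sub_add_sub_cancel]
    _ ≤ (1 + τ) * ‖g y₂ - g x‖ ^ 2 + (1 + 1 / τ) * ‖g x - g y₁‖ ^ 2 :=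
        norm_add_sq_le_of_pos _ _ hτ
    _ ≤ (1 + τ) * (2 * L * bregmanDiv f g x y₂) +
          (1 + 1 / τ) * (L ^ 2 * (2 * (‖x - c‖ ^ 2 + ‖c - y₁‖ ^ 2))) := by
        gcongr
    _ = _ := by ring

theorem stmt_10_general (n m : ℕ) (hm : 0 < m) (L τ : ℝ) (hL : 0 < L) (hτ : 0 < τ)
    (f : Fin m → EuclideanSpace ℝ (Fin n) → ℝ)
    (g : Fin m → EuclideanSpace ℝ (Fin n) → EuclideanSpace ℝ (Fin n))
    (hgrad : ∀ i x, HasGradientAt (f i) (g i x) x)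
    (hconv : ∀ i, ConvexOn ℝ Set.univ (f i))
    (hlip : ∀ i (u v : EuclideanSpace ℝ (Fin n)), ‖g i v - g i u‖ ≤ L * ‖v - u‖)
    (y1 y2 : Fin m → EuclideanSpace ℝ (Fin n))
    (xbar : EuclideanSpace ℝ (Fin n))
    (ybar1 : EuclideanSpace ℝ (Fin n))
    (Df : ℝ)
    (hDf : Df = (m : ℝ)⁻¹ *
      ∑ i, (f i xbar - f i (y2 i) - ⟪g i (y2 i), xbar - y2 i⟫)) :
    ∑ i, ‖g i (y2 i) - g i (y1 i)‖ ^ 2 ≤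
      2 * m * L * (1 + τ) * Df +
      2 * L ^ 2 * (1 + 1 / τ) *
        (m * ‖xbar - ybar1‖ ^ 2 + ∑ i, ‖ybar1 - y1 i‖ ^ 2) := by
  have hmDf : m * Df = ∑ i, bregmanDiv (f i) (g i) xbar (y2 i) := by
    rw [hDf, mul_inv_cancel_left₀ (Nat.cast_pos.2 hm).ne']
    rfl
  calc ∑ i, ‖g i (y2 i) - g i (y1 i)‖ ^ 2
      ≤ ∑ i, (2 * L * (1 + τ) * bregmanDiv (f i) (g i) xbar (y2 i) +
          2 * L ^ 2 * (1 + 1 / τ) * (‖xbar - ybar1‖ ^ 2 + ‖ybar1 - y1 i‖ ^ 2)) :=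
        Finset.sum_le_sum fun i _ =>
          norm_gradient_sub_sq_le hL hτ (hgrad i) (hconv i) (hlip i) _ _ _ _
    _ = _ := by
        simp only [Finset.sum_add_distrib, ← Finset.mul_sum, ← hmDf, Finset.sum_const,
          Finset.card_univ, Fintype.card_fin, nsmul_eq_mul]
        ring

/-- Gradient-difference bound via Bregman distance and consensus errors
(inequality (25) in the paper). -/
theorem stmt_10 (n m : ℕ) (hm : 0 < m) (L τ : ℝ) (hL : 0 < L) (hτ : 0 < τ)
    (f : Fin m → EuclideanSpace ℝ (Fin n) → ℝ)
    (g : Fin m → EuclideanSpace ℝ (Fin n) → EuclideanSpace ℝ (Fin n))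
    (hgrad : ∀ i x, HasGradientAt (f i) (g i x) x)
    (hconv : ∀ i, ConvexOn ℝ Set.univ (f i))
    (hlip : ∀ i (u v : EuclideanSpace ℝ (Fin n)), ‖g i v - g i u‖ ≤ L * ‖v - u‖)
    (y1 y2 : Fin m → EuclideanSpace ℝ (Fin n))
    (xbar : EuclideanSpace ℝ (Fin n))
    (ybar1 : EuclideanSpace ℝ (Fin n)) (hybar1 : ybar1 = (m : ℝ)⁻¹ • ∑ i, y1 i)
    (Df : ℝ)
    (hDf : Df = (m : ℝ)⁻¹ *
      ∑ i, (f i xbar - f i (y2 i) - ⟪g i (y2 i), xbar - y2 i⟫)) :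
    ∑ i, ‖g i (y2 i) - g i (y1 i)‖ ^ 2 ≤
      2 * m * L * (1 + τ) * Df +
      2 * L ^ 2 * (1 + 1 / τ) *
        (m * ‖xbar - ybar1‖ ^ 2 + ∑ i, ‖ybar1 - y1 i‖ ^ 2) :=
  stmt_10_general n m hm L τ hL hτ f g hgrad hconv hlip y1 y2 xbar ybar1 Df hDf
end
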